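/- arXiv:2107.09832 — 3 statements merged into one kernel-verified Lean document; each statement's English description precedes it below -/
import Mathlib

section
/- Let α, β ∈ [0, π), φ ∈ [0, 2π), and R ∈ SL(2, ℝ) with d(α,β,R) ≠ 0. Suppose x, y ∈ ℂ² satisfy y = e^{iφ}·(R x), cos(α)x₁ + sin(α)x₂ = 0, and cos(β)y₁ + sin(β)y₂ = 0. Then x = 0 and y = 0. -/
/-- The real 2×2 matrix of a member of SL(2,ℝ), regarded as a complex matrix via ℝ ⊆ ℂ. -/
noncomputable def SL2toC (R : Matrix.SpecialLinearGroup (Fin 2) ℝ) :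
    Matrix (Fin 2) (Fin 2) ℂ :=
  (R : Matrix (Fin 2) (Fin 2) ℝ).map Complex.ofReal

/-- The quantity d(α,β,R) from the paper. -/
noncomputable def dABR (α β : ℝ) (R : Matrix.SpecialLinearGroup (Fin 2) ℝ) : ℝ :=
  Real.cos α * Real.cos β * (R : Matrix (Fin 2) (Fin 2) ℝ) 0 1
  + Real.cos α * Real.sin β * (R : Matrix (Fin 2) (Fin 2) ℝ) 1 1
  - Real.sin α * Real.cos β * (R : Matrix (Fin 2) (Fin 2) ℝ) 0 0
  - Real.sin α * Real.sin β * (R : Matrix (Fin 2) (Fin 2) ℝ) 1 0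

theorem stmt_1 (α β φ : ℝ) (hα : α ∈ Set.Ico 0 Real.pi) (hβ : β ∈ Set.Ico 0 Real.pi)
    (hφ : φ ∈ Set.Ico 0 (2 * Real.pi))
    (R : Matrix.SpecialLinearGroup (Fin 2) ℝ)
    (hd : dABR α β R ≠ 0)
    (x y : Fin 2 → ℂ)
    (hxy : y = Complex.exp (φ * Complex.I) • ((SL2toC R).mulVec x))
    (ha : (Real.cos α : ℂ) * x 0 + (Real.sin α : ℂ) * x 1 = 0)
    (hb : (Real.cos β : ℂ) * y 0 + (Real.sin β : ℂ) * y 1 = 0) :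
    x = 0 ∧ y = 0 := by
  have he : Complex.exp (φ * Complex.I) ≠ 0 := Complex.exp_ne_zero _
  subst hxy
  simp only [SL2toC, Matrix.mulVec, Matrix.map_apply, dotProduct, Fin.sum_univ_two,
    Pi.smul_apply, smul_eq_mul] at hb
  set E := Complex.exp (φ * Complex.I) with hE
  have h2 : (Real.cos β : ℂ) * (((R : Matrix (Fin 2) (Fin 2) ℝ) 0 0 : ℂ) * x 0
      + ((R : Matrix (Fin 2) (Fin 2) ℝ) 0 1 : ℂ) * x 1)
      + (Real.sin β : ℂ) * (((R : Matrix (Fin 2) (Fin 2) ℝ) 1 0 : ℂ) * x 0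
      + ((R : Matrix (Fin 2) (Fin 2) ℝ) 1 1 : ℂ) * x 1) = 0 := by
    have hE2 : E * ((Real.cos β : ℂ) * (((R : Matrix (Fin 2) (Fin 2) ℝ) 0 0 : ℂ) * x 0
        + ((R : Matrix (Fin 2) (Fin 2) ℝ) 0 1 : ℂ) * x 1)
        + (Real.sin β : ℂ) * (((R : Matrix (Fin 2) (Fin 2) ℝ) 1 0 : ℂ) * x 0
        + ((R : Matrix (Fin 2) (Fin 2) ℝ) 1 1 : ℂ) * x 1)) = 0 := by
      linear_combination hb
    exact (mul_eq_zero.mp hE2).resolve_left he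
  have hd' : (dABR α β R : ℂ) ≠ 0 := by exact_mod_cast hd
  push_cast at ha h2
  have hx0 : x 0 = 0 := by
    have h0 : (dABR α β R : ℂ) * x 0 = 0 := by
      simp only [dABR]
      push_cast
      linear_combination (Complex.cos α * ((R : Matrix (Fin 2) (Fin 2) ℝ) 0 1 : ℂ)
        * 0 + (Complex.cos β * ((R : Matrix (Fin 2) (Fin 2) ℝ) 0 1 : ℂ)
        + Complex.sin β * ((R : Matrix (Fin 2) (Fin 2) ℝ) 1 1 : ℂ))) * ha
        - Complex.sin α * h2
    exact (mul_eq_zero.mp h0).resolve_left hd'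
  have hx1 : x 1 = 0 := by
    have h1 : (dABR α β R : ℂ) * x 1 = 0 := by
      simp only [dABR]
      push_cast
      linear_combination Complex.cos α * h2
        - (Complex.cos β * ((R : Matrix (Fin 2) (Fin 2) ℝ) 0 0 : ℂ)
        + Complex.sin β * ((R : Matrix (Fin 2) (Fin 2) ℝ) 1 0 : ℂ)) * ha
    exact (mul_eq_zero.mp h1).resolve_left hd'
  have hx : x = 0 := by
    funext i
    fin_cases i
    · exact hx0
    · exact hx1
  subst hx
  refine ⟨rfl, ?_⟩
  simp [Matrix.mulVec_zero]
end

section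
/- Let α, β ∈ [0, π), φ ∈ [0, 2π), and R ∈ SL(2, ℝ) with d(α,β,R) = 0. Suppose x, y ∈ ℂ² satisfy y = e^{iφ}·(R x) and cos(α)x₁ + sin(α)x₂ = 0. Then cos(β)y₁ + sin(β)y₂ = 0. -/
theorem stmt_2 (α β φ : ℝ) (hα : α ∈ Set.Ico 0 Real.pi) (hβ : β ∈ Set.Ico 0 Real.pi)
    (hφ : φ ∈ Set.Ico 0 (2 * Real.pi))
    (R : Matrix.SpecialLinearGroup (Fin 2) ℝ)
    (hd : dABR α β R = 0)
    (x y : Fin 2 → ℂ)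
    (hxy : y = Complex.exp (φ * Complex.I) • ((SL2toC R).mulVec x))
    (ha : (Real.cos α : ℂ) * x 0 + (Real.sin α : ℂ) * x 1 = 0) :
    (Real.cos β : ℂ) * y 0 + (Real.sin β : ℂ) * y 1 = 0 := by
  subst hxy
  unfold dABR at hd
  have hd' : (Real.cos α : ℂ) * Real.cos β * ((R : Matrix (Fin 2) (Fin 2) ℝ) 0 1 : ℝ)
      + (Real.cos α : ℂ) * Real.sin β * ((R : Matrix (Fin 2) (Fin 2) ℝ) 1 1 : ℝ)
      - (Real.sin α : ℂ) * Real.cos β * ((R : Matrix (Fin 2) (Fin 2) ℝ) 0 0 : ℝ)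
      - (Real.sin α : ℂ) * Real.sin β * ((R : Matrix (Fin 2) (Fin 2) ℝ) 1 0 : ℝ) = 0 := by
    exact_mod_cast congrArg (Complex.ofReal) hd
  have hp : (Real.cos α : ℂ) ^ 2 + (Real.sin α : ℂ) ^ 2 = 1 := by
    exact_mod_cast congrArg (Complex.ofReal) (Real.cos_sq_add_sin_sq α)
  set E := Complex.exp (φ * Complex.I)
  set c : ℂ := (Real.cos α : ℂ)
  set s : ℂ := (Real.sin α : ℂ)
  set cb : ℂ := (Real.cos β : ℂ)
  set sb : ℂ := (Real.sin β : ℂ)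
  set r00 : ℂ := (((R : Matrix (Fin 2) (Fin 2) ℝ) 0 0 : ℝ) : ℂ)
  set r01 : ℂ := (((R : Matrix (Fin 2) (Fin 2) ℝ) 0 1 : ℝ) : ℂ)
  set r10 : ℂ := (((R : Matrix (Fin 2) (Fin 2) ℝ) 1 0 : ℝ) : ℂ)
  set r11 : ℂ := (((R : Matrix (Fin 2) (Fin 2) ℝ) 1 1 : ℝ) : ℂ)
  simp only [Pi.smul_apply, Matrix.mulVec, dotProduct, Fin.sum_univ_two, SL2toC,
    Matrix.map_apply, smul_eq_mul]
  linear_combination E * (c * x 1 - s * x 0) * hd'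
    + E * (c * (cb * r00 + sb * r10) + s * (cb * r01 + sb * r11)) * ha
    - E * (cb * (r00 * x 0 + r01 * x 1) + sb * (r10 * x 0 + r11 * x 1)) * hp
end

section
/- Let δ, ν, γ ∈ ℝ with δ > −1, ν < 1, 0 ≤ γ < 1, set c = 2 + δ − ν, and let b₀ ∈ (0,∞). Define u₀(x) = (1−ν)⁻¹ x^{(1−ν+cγ)/2}, and û₀(x) = (1−ν)(cγ)⁻¹ x^{(1−ν−cγ)/2} if γ > 0, û₀(x) = (1−ν) x^{(1−ν)/2} ln(1/x) if γ = 0. Then both x ↦ x^δ u₀(x)² and x ↦ x^δ û₀(x)² are (Lebesgue) integrable on (0, b₀); that is, both solutions of τ_{δ,ν,γ} u = 0 lie in L²((0, b₀); x^δ dx). -/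
open MeasureTheory Set Real

lemma aux_rpow_int {r b : ℝ} (hr : -1 < r) (hb : 0 < b) :
    IntegrableOn (fun x : ℝ => x ^ r) (Ioo 0 b) := by
  have := intervalIntegral.intervalIntegrable_rpow' (a := 0) (b := b) hr
  rwa [intervalIntegrable_iff_integrableOn_Ioo_of_le hb.le] at this

lemma aux_log_int {s b : ℝ} (hs : -1 < s) (hb : 0 < b) :
    IntegrableOn (fun x : ℝ => x ^ s * (Real.log x) ^ 2) (Ioo 0 b) := by
  set ε : ℝ := (s + 1) / 4 with hε
  have hε0 : 0 < ε := by simp only [hε]; linarith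
  have hg : IntegrableOn
      (fun x : ℝ => 2 / ε ^ 2 * (x ^ (s + 2 * ε) + x ^ (s - 2 * ε))) (Ioo 0 b) :=
    (((aux_rpow_int (by simp only [hε]; linarith) hb).add
      (aux_rpow_int (by simp only [hε]; linarith) hb)).const_mul _)
  refine Integrable.mono' hg ?_ ?_
  · have : Measurable (fun x : ℝ => x ^ s * Real.log x ^ 2) := by measurability
    exact this.aestronglyMeasurable
  · filter_upwards [ae_restrict_mem measurableSet_Ioo] with x hx
    have hx0 : 0 < x := hx.1
    have key : |Real.log x| ≤ (x ^ ε + x ^ (-ε)) / ε := by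
      rcases le_total 1 x with h1 | h1
      · have h2 : Real.log x ≤ x ^ ε / ε := Real.log_le_rpow_div hx0.le hε0
        have h3 : 0 ≤ Real.log x := Real.log_nonneg h1
        have h4 : 0 ≤ x ^ (-ε) := Real.rpow_nonneg hx0.le _
        rw [abs_of_nonneg h3]
        refine h2.trans ?_
        gcongr
        exact le_add_of_nonneg_right h4
      · have h2 : Real.log x⁻¹ ≤ (x⁻¹) ^ ε / ε :=
          Real.log_le_rpow_div (by positivity) hε0
        rw [Real.log_inv, Real.inv_rpow hx0.le, ← Real.rpow_neg hx0.le] at h2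
        have h3 : Real.log x ≤ 0 := Real.log_nonpos hx0.le h1
        have h4 : 0 ≤ x ^ ε := Real.rpow_nonneg hx0.le _
        rw [abs_of_nonpos h3]
        refine h2.trans ?_
        gcongr
        exact le_add_of_nonneg_left h4
    have hnn : 0 ≤ x ^ s := Real.rpow_nonneg hx0.le _
    have hsq : (Real.log x) ^ 2 ≤ ((x ^ ε + x ^ (-ε)) / ε) ^ 2 := by
      rw [← sq_abs (Real.log x)]
      have h0 : (0:ℝ) ≤ |Real.log x| := abs_nonneg _
      exact pow_le_pow_left₀ h0 key 2
    have hexp : ((x ^ ε + x ^ (-ε)) / ε) ^ 2 ≤ 2 / ε ^ 2 * (x ^ (2*ε) + x ^ (-(2*ε))) := by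
      rw [div_pow]
      have h2e : (x ^ ε) ^ 2 = x ^ (2*ε) := by
        rw [← Real.rpow_natCast (x ^ ε) 2, ← Real.rpow_mul hx0.le]; ring_nf
      have h2e' : (x ^ (-ε)) ^ 2 = x ^ (-(2*ε)) := by
        rw [← Real.rpow_natCast (x ^ (-ε)) 2, ← Real.rpow_mul hx0.le]; ring_nf
      calc (x ^ ε + x ^ (-ε)) ^ 2 / ε ^ 2
          ≤ 2 * (x ^ (2*ε) + x ^ (-(2*ε))) / ε ^ 2 := by
            gcongr
            nlinarith [sq_nonneg (x ^ ε - x ^ (-ε))]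
        _ = 2 / ε ^ 2 * (x ^ (2*ε) + x ^ (-(2*ε))) := by ring
    have h1 : ‖x ^ s * Real.log x ^ 2‖ = x ^ s * Real.log x ^ 2 := by
      rw [Real.norm_eq_abs, abs_of_nonneg (by positivity)]
    rw [h1]
    have : x ^ s * Real.log x ^ 2 ≤ x ^ s * (2 / ε ^ 2 * (x ^ (2*ε) + x ^ (-(2*ε)))) :=
      mul_le_mul_of_nonneg_left (hsq.trans hexp) hnn
    refine this.trans (le_of_eq ?_)
    have h2pos : (0:ℝ) < x ^ (2*ε) := Real.rpow_pos_of_pos hx0 _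
    rw [Real.rpow_add hx0 s (2*ε), Real.rpow_sub hx0, Real.rpow_neg hx0.le (2*ε)]
    field_simp

theorem stmt_16 (δ ν γ : ℝ) (hδ : δ > -1) (hν : ν < 1) (hγ0 : 0 ≤ γ) (hγ1 : γ < 1)
    (c : ℝ) (hc : c = 2 + δ - ν) (b₀ : ℝ) (hb₀ : 0 < b₀)
    (u₀ uhat₀ : ℝ → ℝ)
    (hu : ∀ x : ℝ, u₀ x = (1 - ν)⁻¹ * x ^ ((1 - ν + c * γ) / 2))
    (huhat : ∀ x : ℝ, uhat₀ x =
      if 0 < γ then (1 - ν) * (c * γ)⁻¹ * x ^ ((1 - ν - c * γ) / 2)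
      else (1 - ν) * x ^ ((1 - ν) / 2) * Real.log (1 / x)) :
    MeasureTheory.IntegrableOn (fun x : ℝ => x ^ δ * (u₀ x) ^ 2) (Set.Ioo 0 b₀) ∧
    MeasureTheory.IntegrableOn (fun x : ℝ => x ^ δ * (uhat₀ x) ^ 2) (Set.Ioo 0 b₀) := by
  have hc0 : 0 < c := by rw [hc]; linarith
  have sqhalf : ∀ x p : ℝ, 0 < x → (x ^ (p / 2)) ^ 2 = x ^ p := by
    intro x p hx
    rw [← Real.rpow_natCast (x ^ (p/2)) 2, ← Real.rpow_mul hx.le]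
    norm_num
  constructor
  · have h1 : -1 < δ + (1 - ν + c * γ) := by nlinarith
    have hint := (aux_rpow_int h1 hb₀).const_mul ((1 - ν)⁻¹ ^ 2)
    refine IntegrableOn.congr_fun hint (fun x hx => ?_) measurableSet_Ioo
    have hx0 : (0:ℝ) < x := hx.1
    rw [hu x, mul_pow, sqhalf x _ hx0, Real.rpow_add hx0]
    ring
  · by_cases hγ : 0 < γ
    · have h1 : -1 < δ + (1 - ν - c * γ) := by nlinarith
      have hint := (aux_rpow_int h1 hb₀).const_mul (((1 - ν) * (c * γ)⁻¹) ^ 2)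
      refine IntegrableOn.congr_fun hint (fun x hx => ?_) measurableSet_Ioo
      have hx0 : (0:ℝ) < x := hx.1
      rw [huhat x, if_pos hγ, Real.rpow_add hx0, ← sqhalf x (1 - ν - c * γ) hx0]
      ring
    · have hγe : γ = 0 := le_antisymm (not_lt.1 hγ) hγ0
      have h1 : -1 < δ + (1 - ν) := by linarith
      have hint := (aux_log_int h1 hb₀).const_mul ((1 - ν) ^ 2)
      refine IntegrableOn.congr_fun hint (fun x hx => ?_) measurableSet_Ioo
      have hx0 : (0:ℝ) < x := hx.1
      rw [huhat x, if_neg hγ, one_div, Real.log_inv, Real.rpow_add hx0,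
        ← sqhalf x (1 - ν) hx0]
      ring
end
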